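/- arXiv:2004.11972 — 4 statements merged into one kernel-verified Lean document; each statement's English description precedes it below -/
import Mathlib

section
/- Let L be a geometric lattice of finite height and let B be a set of atoms of L. Let ℒ(B) be the subposet {⋁_L F : F a finite subset of B} of L (in particular 0 ∈ ℒ(B), as the empty join). Then ℒ(B) is itself a geometric lattice of finite height, its least element is 0_L, and its set of atoms is exactly B. -/
universe u

/-- An element of a poset is an *atom* (point) if it is an upper cover of a least element. -/
def IsAtomP {P : Type*} [PartialOrder P] (a : P) : Prop :=
  ∃ z : P, (∀ w, z ≤ w) ∧ z ⋖ a

/-- An element of a poset is a *coatom* (hyperplane) if it is a lower cover of a greatest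
element. -/
def IsCoatomP {P : Type*} [PartialOrder P] (a : P) : Prop :=
  ∃ z : P, (∀ w, w ≤ z) ∧ a ⋖ z

/-- A partial order is a *geometric lattice of finite height* if it is a lattice
(binary joins and meets exist), has no infinite chains, is semimodular, and every
element is a join (least upper bound) of a set of atoms. -/
def IsGeomLatFH (P : Type*) [PartialOrder P] : Prop :=
  (∀ x y : P, ∃ z, IsLUB {x, y} z) ∧
  (∀ x y : P, ∃ z, IsGLB {x, y} z) ∧
  (∀ c : Set P, IsChain (· ≤ ·) c → c.Finite) ∧
  (∀ a b c : P, a ⋖ b → a ⋖ c → b ≠ c → ∃ d, b ⋖ d ∧ c ⋖ d) ∧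
  (∀ x : P, ∃ S : Set P, (∀ a ∈ S, IsAtomP a) ∧ IsLUB S x)

/-- `r` is the rank (height) function of a graded bounded poset: `r ⊥ = 0` and `r`
increases by exactly one across covering pairs. -/
def IsRankFn {L : Type*} [PartialOrder L] [OrderBot L] (r : L → ℕ) : Prop :=
  r ⊥ = 0 ∧ ∀ x y : L, x ⋖ y → r y = r x + 1

/-- A *matching* of a lattice: an injection from atoms to coatoms (hyperplanes) such
that each atom lies below its image. -/
def HasMatching (L : Type*) [CompleteLattice L] : Prop :=
  ∃ f : {a : L // IsAtom a} → {h : L // IsCoatom h},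
    Function.Injective f ∧ ∀ a : {a : L // IsAtom a}, (a : L) ≤ ((f a : {h : L // IsCoatom h}) : L)

/-- `joinClosure B` is the subposet `ℒ(B)` of all joins of finite subsets of `B`. -/
def joinClosure {L : Type*} [CompleteLattice L] (B : Set L) : Set L :=
  {x | ∃ F : Finset L, ↑F ⊆ B ∧ x = sSup (↑F : Set L)}

/-
Finite chains make `L` well founded in both directions, so every join in `L` is a finite join
and `ℒ(B)` is closed under arbitrary joins; it is therefore a complete lattice, with meets
computed as joins of lower bounds. The key geometric fact is that in a semimodular lattice of
finite height `x ⋖ x ⊔ p` for every atom `p ≰ x` (by induction on `x`, pushing a lower cover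
of `x` through the diamond). Hence every cover in `ℒ(B)` is a cover in `L`, so semimodularity
descends to `ℒ(B)`, and the atoms of `ℒ(B)` are the atoms of `L` lying in `ℒ(B)`, namely `B`.
-/

def IsCoverSemimodular (P : Type*) [PartialOrder P] : Prop :=
  ∀ a b c : P, a ⋖ b → a ⋖ c → b ≠ c → ∃ d, b ⋖ d ∧ c ⋖ d

theorem wellFoundedLT_of_isChain_finite {α : Type*} [Preorder α]
    (h : ∀ c : Set α, IsChain (· ≤ ·) c → c.Finite) : WellFoundedLT α := by
  rw [WellFoundedLT, isWellFounded_iff, RelEmbedding.wellFounded_iff_isEmpty]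
  refine ⟨fun f => ?_⟩
  have hf : StrictAnti f := fun _ _ hmn => f.map_rel_iff.2 hmn
  exact Set.infinite_range_of_injective hf.injective (h _ hf.antitone.isChain_range)

theorem wellFoundedGT_of_isChain_finite {α : Type*} [Preorder α]
    (h : ∀ c : Set α, IsChain (· ≤ ·) c → c.Finite) : WellFoundedGT α :=
  wellFoundedLT_of_isChain_finite (α := αᵒᵈ) fun c hc => h c hc.symm

theorem isChain_finite_subtype {α : Type*} [Preorder α]
    (h : ∀ c : Set α, IsChain (· ≤ ·) c → c.Finite) (p : α → Prop) :
    ∀ c : Set (Subtype p), IsChain (· ≤ ·) c → c.Finite := fun _ hc =>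
  (h _ (hc.image (OrderEmbedding.subtype p))).of_finite_image Subtype.val_injective.injOn

theorem isAtomP_iff_isAtom {P : Type*} [PartialOrder P] [OrderBot P] {a : P} :
    IsAtomP a ↔ IsAtom a := by
  refine ⟨fun ⟨z, hz, hza⟩ => ?_, fun h => ⟨⊥, fun _ => bot_le, h.bot_covBy⟩⟩
  rw [le_antisymm (hz ⊥) bot_le] at hza
  exact bot_covBy_iff.1 hza

namespace IsCoverSemimodular

variable {L : Type*} [Lattice L]

theorem covBy_sup (hsm : IsCoverSemimodular L) {a b c : L} (hab : a ⋖ b) (hac : a ⋖ c)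
    (hbc : b ≠ c) : b ⋖ b ⊔ c ∧ c ⋖ b ⊔ c := by
  obtain ⟨d, hbd, hcd⟩ := hsm a b c hab hac hbc
  have hcb : ¬ c ≤ b := fun hcb => hab.2 hac.lt (lt_of_le_of_ne hcb hbc.symm)
  obtain rfl : b ⊔ c = d :=
    (hbd.wcovBy.eq_or_eq le_sup_left (sup_le hbd.le hcd.le)).resolve_left
      fun h => hcb (sup_eq_left.1 h)
  exact ⟨hbd, hcd⟩

theorem covBy_sup_atom [OrderBot L] [WellFoundedLT L] [WellFoundedGT L]
    (hsm : IsCoverSemimodular L) {p : L} (hp : IsAtom p) (a : L) (hpa : ¬ p ≤ a) :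
    a ⋖ a ⊔ p := by
  induction a using WellFoundedLT.induction with
  | _ a ih =>
  rcases eq_bot_or_bot_lt a with rfl | ha
  · simpa using hp.bot_covBy
  obtain ⟨a', -, ha'⟩ := exists_le_covBy_of_lt ha
  have h := (hsm.covBy_sup ha' (ih a' ha'.lt fun h => hpa (h.trans ha'.le))
    fun h => hpa (h ▸ le_sup_right)).1
  rwa [← sup_assoc, sup_eq_left.2 ha'.le] at h

end IsCoverSemimodular

section joinClosure

variable {L : Type*} [CompleteLattice L] {B : Set L}

theorem bot_mem_joinClosure : (⊥ : L) ∈ joinClosure B :=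
  ⟨∅, by simp, by simp⟩

instance : OrderBot (joinClosure B) := Subtype.orderBot bot_mem_joinClosure

theorem mem_joinClosure_of_mem {b : L} (hb : b ∈ B) : b ∈ joinClosure B :=
  ⟨{b}, by simp [hb], by simp⟩

theorem sSup_inter_Iic_eq {x : L} (hx : x ∈ joinClosure B) : sSup (B ∩ Set.Iic x) = x := by
  obtain ⟨F, hF, rfl⟩ := hx
  exact le_antisymm (sSup_le fun _ hp => hp.2)
    (sSup_le_sSup fun p hp => ⟨hF hp, le_sSup hp⟩)

theorem exists_mem_le_not_le_of_lt {x y : L} (hy : y ∈ joinClosure B) (hxy : x < y) :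
    ∃ p ∈ B, p ≤ y ∧ ¬ p ≤ x := by
  by_contra! h
  rw [← sSup_inter_Iic_eq hy] at hxy
  exact hxy.not_ge (sSup_le fun p hp => h p hp.1 hp.2)

theorem isAtom_iff_mem (hB : ∀ b ∈ B, IsAtom b) {x : L} (hx : x ∈ joinClosure B) :
    IsAtom x ↔ x ∈ B := by
  refine ⟨fun h => ?_, hB x⟩
  obtain ⟨p, hpB, hpx, hp⟩ := exists_mem_le_not_le_of_lt hx h.bot_lt
  rwa [← (h.le_iff.1 hpx).resolve_left fun h => hp h.le]

theorem isLUB_joinClosure_atoms (x : joinClosure B) :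
    IsLUB (Subtype.val ⁻¹' (B ∩ Set.Iic (x : L))) x := by
  refine IsLUB.of_image Subtype.coe_le_coe ?_
  rw [Subtype.image_preimage_coe, Set.inter_eq_right.2 fun p hp => mem_joinClosure_of_mem hp.1]
  simpa only [sSup_inter_Iic_eq x.2] using isLUB_sSup (B ∩ Set.Iic (x : L))

variable [WellFoundedGT L]

theorem sSup_mem_joinClosure_of_subset {S : Set L} (hS : S ⊆ B) : sSup S ∈ joinClosure B := by
  obtain ⟨F, hFS, hF⟩ := (CompleteLattice.wellFoundedGT_iff_isSupFiniteCompact L).1 ‹_› S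
  exact ⟨F, hFS.trans hS, by rw [hF, Finset.sup_id_eq_sSup]⟩

theorem sSup_mem_joinClosure {S : Set L} (hS : S ⊆ joinClosure B) : sSup S ∈ joinClosure B := by
  have hsub : ∀ x ∈ S, x ≤ sSup (B ∩ Set.Iic (sSup S)) := fun x hx =>
    sSup_inter_Iic_eq (hS hx) ▸
      sSup_le_sSup (Set.inter_subset_inter_right _ (Set.Iic_subset_Iic.2 (le_sSup hx)))
  rw [le_antisymm (sSup_le hsub) (sSup_le fun _ hp => hp.2)]
  exact sSup_mem_joinClosure_of_subset Set.inter_subset_left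

theorem sup_mem_joinClosure {x y : L} (hx : x ∈ joinClosure B) (hy : y ∈ joinClosure B) :
    x ⊔ y ∈ joinClosure B :=
  sSup_pair (a := x) (b := y) ▸ sSup_mem_joinClosure (Set.pair_subset hx hy)

theorem exists_isLUB_joinClosure (T : Set (joinClosure B)) : ∃ x, IsLUB T x := by
  have hT : Subtype.val '' T ⊆ joinClosure B := by
    rintro _ ⟨y, -, rfl⟩
    exact y.2
  exact ⟨⟨_, sSup_mem_joinClosure hT⟩, IsLUB.of_image Subtype.coe_le_coe (isLUB_sSup _)⟩

variable [WellFoundedLT L]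

theorem coe_covBy_coe_iff (hsm : IsCoverSemimodular L) (hB : ∀ b ∈ B, IsAtom b)
    {x y : joinClosure B} : (x : L) ⋖ y ↔ x ⋖ y := by
  refine ⟨fun h => CovBy.of_image (OrderEmbedding.subtype _) h, fun h => ?_⟩
  obtain ⟨p, hpB, hpy, hpx⟩ := exists_mem_le_not_le_of_lt y.2 (Subtype.coe_lt_coe.2 h.lt)
  let z : joinClosure B := ⟨x ⊔ p, sup_mem_joinClosure x.2 (mem_joinClosure_of_mem hpB)⟩
  have hxz : x ≤ z := Subtype.coe_le_coe.1 le_sup_left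
  have hzy : z ≤ y := Subtype.coe_le_coe.1 (sup_le h.le hpy)
  obtain rfl : z = y := (h.wcovBy.eq_or_eq hxz hzy).resolve_left
    fun hzx => hpx (le_sup_right.trans (Subtype.coe_le_coe.2 hzx.le))
  exact hsm.covBy_sup_atom (hB p hpB) x hpx

theorem isCoverSemimodular_joinClosure (hsm : IsCoverSemimodular L) (hB : ∀ b ∈ B, IsAtom b) :
    IsCoverSemimodular (joinClosure B) := by
  intro a b c hab hac hbc
  obtain ⟨hb, hc⟩ := hsm.covBy_sup ((coe_covBy_coe_iff hsm hB).2 hab)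
    ((coe_covBy_coe_iff hsm hB).2 hac) (Subtype.coe_injective.ne hbc)
  exact ⟨⟨_, sup_mem_joinClosure b.2 c.2⟩, (coe_covBy_coe_iff hsm hB).1 hb,
    (coe_covBy_coe_iff hsm hB).1 hc⟩

theorem isAtomP_joinClosure_iff (hsm : IsCoverSemimodular L) (hB : ∀ b ∈ B, IsAtom b)
    (x : joinClosure B) : IsAtomP x ↔ (x : L) ∈ B := by
  rw [isAtomP_iff_isAtom, ← bot_covBy_iff, ← coe_covBy_coe_iff hsm hB,
    Subtype.coe_bot bot_mem_joinClosure, bot_covBy_iff, isAtom_iff_mem hB x.2]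

end joinClosure

/-- For a set `B` of atoms of a geometric lattice `L` of finite height, the subposet
`ℒ(B)` of joins of finite subsets of `B` is itself a geometric lattice of finite height,
its least element is `0_L`, and its set of atoms is exactly `B`. -/
theorem joinClosure_isGeomLatFH {L : Type u} [CompleteLattice L]
    (hL : IsGeomLatFH L) (B : Set L) (hB : ∀ b ∈ B, IsAtom b) :
    IsGeomLatFH ↥(joinClosure B) ∧
    IsLeast (joinClosure B) ⊥ ∧
    (∀ x : ↥(joinClosure B), IsAtomP x ↔ (x : L) ∈ B) := by
  obtain ⟨-, -, hchain, hsm, -⟩ := hL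
  have := wellFoundedLT_of_isChain_finite hchain
  have := wellFoundedGT_of_isChain_finite hchain
  have hatom := isAtomP_joinClosure_iff hsm hB
  refine ⟨⟨fun _ _ => exists_isLUB_joinClosure _, fun x y => ?_,
    isChain_finite_subtype hchain _, isCoverSemimodular_joinClosure hsm hB,
    fun x => ⟨_, fun a ha => (hatom a).2 ha.1, isLUB_joinClosure_atoms x⟩⟩,
    ⟨bot_mem_joinClosure, fun _ _ => bot_le⟩, hatom⟩
  obtain ⟨z, hz⟩ := exists_isLUB_joinClosure (lowerBounds {x, y})
  exact ⟨z, isLUB_lowerBounds.1 hz⟩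
end

section
/- Let L be a geometric lattice of finite height and let B be a set of atoms of L such that ⋁_L B = 1_L. Let ℒ(B) = {⋁_L F : F a finite subset of B}, a geometric lattice of finite height under the order inherited from L. Then every coatom of ℒ(B) is a coatom (hyperplane) of L. -/
universe u

/-- If `⋁ B = 1_L`, then every coatom of the geometric lattice `ℒ(B)` is a coatom
(hyperplane) of `L`. -/
theorem joinClosure_coatoms {L : Type u} [CompleteLattice L]
    (hL : IsGeomLatFH L) (B : Set L) (hB : ∀ b ∈ B, IsAtom b) (htop : sSup B = ⊤) :
    ∀ x : ↥(joinClosure B), IsCoatomP x → IsCoatom (x : L) := by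
  obtain ⟨-, -, hchain, hsemi, -⟩ := hL
  -- `<` is well-founded
  have wf : WellFounded ((· < ·) : L → L → Prop) := by
    rw [RelEmbedding.wellFounded_iff_isEmpty]
    constructor
    intro f
    have hanti : StrictAnti (f : ℕ → L) := fun m n h => f.map_rel_iff.2 h
    have hch : IsChain (· ≤ ·) (Set.range (f : ℕ → L)) := by
      rintro _ ⟨m, rfl⟩ _ ⟨n, rfl⟩ hne
      rcases lt_trichotomy m n with h | h | h
      · exact Or.inr (hanti h).le
      · exact absurd (congrArg f h) hne
      · exact Or.inl (hanti h).le
    exact (Set.infinite_range_of_injective hanti.injective) (hchain _ hch)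
  -- `>` is well-founded
  have wfg : WellFounded ((· > ·) : L → L → Prop) := by
    rw [RelEmbedding.wellFounded_iff_isEmpty]
    constructor
    intro f
    have hmono : StrictMono (f : ℕ → L) := fun m n h => f.map_rel_iff.2 h
    have hch : IsChain (· ≤ ·) (Set.range (f : ℕ → L)) := by
      rintro _ ⟨m, rfl⟩ _ ⟨n, rfl⟩ hne
      rcases lt_trichotomy m n with h | h | h
      · exact Or.inl (hmono h).le
      · exact absurd (congrArg f h) hne
      · exact Or.inr (hmono h).le
    exact (Set.infinite_range_of_injective hmono.injective) (hchain _ hch)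
  -- every nonbot element has a lower cover
  have hcov_ex : ∀ x : L, x ≠ ⊥ → ∃ y, y ⋖ x := by
    intro x hx
    obtain ⟨y, hy, hmax⟩ := wfg.has_min {z | z < x} ⟨⊥, bot_lt_iff_ne_bot.2 hx⟩
    exact ⟨y, hy, fun c hyc hcx => hmax c hcx hyc⟩
  -- covering property: for an atom `p` not below `x`, `x ⋖ x ⊔ p`
  have cover_atom : ∀ x p : L, IsAtom p → ¬ p ≤ x → x ⋖ x ⊔ p := by
    intro x
    induction x using WellFounded.induction wf with
    | _ x ih =>
      intro p hp hpx
      rcases eq_or_ne x ⊥ with rfl | hx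
      · simpa using hp.bot_covBy
      · obtain ⟨y, hyx⟩ := hcov_ex x hx
        have hpy : ¬ p ≤ y := fun h => hpx (h.trans hyx.le)
        have h1 : y ⋖ y ⊔ p := ih y hyx.lt p hp hpy
        have hne : x ≠ y ⊔ p := fun h => hpx (le_sup_right.trans h.ge)
        obtain ⟨d, hxd, hyd⟩ := hsemi y x (y ⊔ p) hyx h1 hne
        have hle : x ⊔ p ≤ d := sup_le hxd.le (le_sup_right.trans hyd.le)
        have hlt : x < x ⊔ p :=
          lt_of_le_of_ne le_sup_left (fun h => hpx (le_sup_right.trans h.ge))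
        have hde : x ⊔ p = d := by
          by_contra hne2
          exact hxd.2 hlt (lt_of_le_of_ne hle hne2)
        exact hde ▸ hxd
  classical
  intro x hx
  obtain ⟨z, hzg, hcov⟩ := hx
  -- the top of the subtype is ⊤
  have hztop : (z : L) = ⊤ := by
    apply top_unique
    rw [← htop]
    apply sSup_le
    intro b hb
    have hbmem : b ∈ joinClosure B := ⟨{b}, by simpa using hb, by simp⟩
    exact hzg ⟨b, hbmem⟩
  have hxlt : (x : L) < ⊤ := hztop ▸ (Subtype.coe_lt_coe.2 hcov.lt)
  -- find an atom of B not below x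
  have hbex : ∃ b ∈ B, ¬ b ≤ (x : L) := by
    by_contra h
    push_neg at h
    exact absurd (top_unique (htop ▸ sSup_le h)) (ne_of_lt hxlt)
  obtain ⟨b, hb, hbx⟩ := hbex
  obtain ⟨F, hF, hxF⟩ := x.2
  have hmem : (x : L) ⊔ b ∈ joinClosure B := by
    refine ⟨insert b F, ?_, ?_⟩
    · rw [Finset.coe_insert]
      exact Set.insert_subset_iff.2 ⟨hb, hF⟩
    · rw [Finset.coe_insert, sSup_insert, ← hxF, sup_comm]
  have hltw : x < (⟨(x : L) ⊔ b, hmem⟩ : ↥(joinClosure B)) :=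
    Subtype.coe_lt_coe.1 (by simpa using left_lt_sup.2 hbx)
  have hweq : (x : L) ⊔ b = (z : L) := by
    by_contra h
    exact hcov.2 hltw (lt_of_le_of_ne (hzg _) (fun h' => h (congrArg Subtype.val h')))
  have hsuptop : (x : L) ⊔ b = ⊤ := by rw [hweq, hztop]
  have hcovtop : (x : L) ⋖ ⊤ := hsuptop ▸ cover_atom (x : L) b (hB b hb) hbx
  constructor
  · exact ne_of_lt hxlt
  · intro y hy
    by_contra h
    exact hcovtop.2 hy (lt_of_le_of_ne le_top h)
end

section
/- Let L be an infinite geometric lattice of finite rank at least 2 such that for every atom p of L, the cardinality of the set of hyperplanes above p equals |L|. Then L has a matching. -/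
universe u

open Cardinal in
lemma exists_sdr {β ι : Type u} (S : ι → Set β)
    (hι : #ι ≤ #β) (hS : ∀ i, #(S i) = #β) :
    ∃ f : ι → β, Function.Injective f ∧ ∀ i, f i ∈ S i := by
  classical
  set κ := #β with hκ
  obtain ⟨e⟩ : Nonempty (ι ↪ κ.ord.ToType) := by
    rw [← Cardinal.le_def, Cardinal.mk_ord_toType]; exact hι
  set T : κ.ord.ToType → Set β := fun x =>
    if h : ∃ i, e i = x then S h.choose else Set.univ with hT
  have hTcard : ∀ x, #(T x) = κ := by
    intro x; rw [hT]; dsimp only; split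
    · exact hS _
    · exact Cardinal.mk_univ
  have wf : WellFounded ((· < ·) : κ.ord.ToType → κ.ord.ToType → Prop) :=
    wellFounded_lt
  have key : ∀ (x : κ.ord.ToType) (v : ∀ y, y < x → β),
      ∃ b, b ∈ T x ∧ ∀ y (h : y < x), v y h ≠ b := by
    intro x v
    set R : Set β := Set.range (fun y : Set.Iio x => v y y.2) with hR
    have hRcard : #R < κ := by
      calc #R ≤ #(Set.Iio x) := Cardinal.mk_range_le
        _ < κ := Cardinal.mk_Iio_ord_toType x
    have hne : (T x \ R).Nonempty := by
      by_contra h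
      rw [Set.not_nonempty_iff_eq_empty, Set.diff_eq_empty] at h
      exact absurd (hTcard x ▸ Cardinal.mk_le_mk_of_subset h) hRcard.not_ge
    obtain ⟨b, hb1, hb2⟩ := hne
    refine ⟨b, hb1, fun y hy hvb => hb2 ?_⟩
    exact ⟨⟨y, hy⟩, hvb⟩
  set g : κ.ord.ToType → β :=
    wf.fix (fun x IH => (key x IH).choose) with hg
  have hgspec : ∀ x, g x ∈ T x ∧ ∀ y (h : y < x), g y ≠ g x := by
    intro x
    have := wf.fix_eq (fun x IH => (key x IH).choose) x
    rw [hg, this]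
    exact (key x (fun y _ => wf.fix (fun x IH => (key x IH).choose) y)).choose_spec
  have hginj : Function.Injective g := by
    intro x y hxy
    rcases lt_trichotomy x y with h | h | h
    · exact absurd hxy ((hgspec y).2 x h)
    · exact h
    · exact absurd hxy.symm ((hgspec x).2 y h)
  refine ⟨fun i => g (e i), hginj.comp e.injective, fun i => ?_⟩
  have hmem := (hgspec (e i)).1
  rw [hT] at hmem
  dsimp only at hmem
  rw [dif_pos ⟨i, rfl⟩] at hmem
  have : (⟨i, rfl⟩ : ∃ j, e j = e i).choose = i :=
    e.injective (⟨i, rfl⟩ : ∃ j, e j = e i).choose_spec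
  rwa [this] at hmem

/-- An infinite geometric lattice of finite rank at least 2 in which every atom lies
below `|L|`-many hyperplanes has a matching. -/
theorem many_coatoms_above_each_atom_matching {L : Type u} [CompleteLattice L]
    (hL : IsGeomLatFH L) (hinf : Infinite L) (r : L → ℕ) (hr : IsRankFn r)
    (hrank : 2 ≤ r ⊤)
    (hmany : ∀ p : L, IsAtom p → Cardinal.mk {h : L | IsCoatom h ∧ p ≤ h} = Cardinal.mk L) :
    HasMatching L := by
  classical
  obtain ⟨f, hinj, hmem⟩ := exists_sdr (fun a : {a : L // IsAtom a} => {h : L | IsCoatom h ∧ (a : L) ≤ h})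
    (Cardinal.mk_subtype_le _) (fun a => hmany a a.2)
  exact ⟨fun a => ⟨f a, (hmem a).1⟩,
    fun a b hab => hinj (congrArg Subtype.val hab),
    fun a => (hmem a).2⟩
end

section
/- Let L be a geometric lattice of finite height with rank at least 2, let h₀ be a hyperplane of L, let y be the join of all atoms of L that are not below h₀, and let x be a lower cover of h₀. Then x lies below exactly two hyperplanes of L if and only if x = h₀ ∧ h for some hyperplane h of L with y ≤ h. -/
universe u

/-!
For an atom `p ≰ h₀` semimodularity gives `x ⋖ x ⊔ p`; as `x ⊔ p` and `h₀` are distinct upper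
covers of `x`, they have a common upper cover, which must be `⊤`, so `x ⊔ p` is a hyperplane.
Conversely a hyperplane `g ≠ h₀` above `x` contains an atom `p ≰ h₀`, and then `g = x ⊔ p`.
So the hyperplanes above `x` other than `h₀` are exactly the joins `x ⊔ p` with `p ≰ h₀`, and
there is only one of them, `h`, precisely when every such `p` lies below `h`, i.e. `y ≤ h`.
Since `x ⋖ h₀`, any hyperplane `h ≠ h₀` above `x` satisfies `x = h₀ ⊓ h`.
-/

section ChainFinite

variable {α : Type*} [Preorder α]

theorem wellFoundedLT_of_chains_finite (hc : ∀ c : Set α, IsChain (· ≤ ·) c → c.Finite) :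
    WellFoundedLT α := by
  refine ⟨RelEmbedding.wellFounded_iff_isEmpty.2 ⟨fun f => ?_⟩⟩
  have hf : StrictAnti f := fun _ _ h => f.map_rel_iff.2 h
  exact (hc _ hf.antitone.isChain_range).not_infinite
    (Set.infinite_range_of_injective f.injective)

theorem wellFoundedGT_of_chains_finite (hc : ∀ c : Set α, IsChain (· ≤ ·) c → c.Finite) :
    WellFoundedGT α :=
  wellFoundedLT_of_chains_finite (α := αᵒᵈ) fun c h => hc c h.symm

end ChainFinite

theorem Set.encard_eq_two_iff_exists_sdiff_eq_singleton {α : Type*} {s : Set α} {a : α}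
    (ha : a ∈ s) : s.encard = 2 ↔ ∃ b, s \ {a} = {b} := by
  rw [← Set.encard_sdiff_singleton_add_one ha, ← Set.encard_eq_one]
  exact (ENat.add_left_injective_of_ne_top ENat.one_ne_top).eq_iff (b := 1)

section Semimodular

variable {α : Type*} [Lattice α]

theorem CovBy.eq_inf_of_le_of_not_le {x a b : α} (hxa : x ⋖ a) (hxb : x ≤ b) (hab : ¬ a ≤ b) :
    x = a ⊓ b :=
  (hxa.eq_or_eq (le_inf hxa.le hxb) inf_le_left).resolve_right (inf_lt_left.2 hab).ne |>.symm

/-- Induct along a lower cover `a ⋖ z`: the common upper cover of `z` and `a ⊔ p` given by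
semimodularity is `z ⊔ p`. -/
theorem covBy_sup_of_isAtom_of_not_le [OrderBot α] [WellFoundedLT α] [IsStronglyCoatomic α]
    (hsemi : ∀ a b c : α, a ⋖ b → a ⋖ c → b ≠ c → ∃ d, b ⋖ d ∧ c ⋖ d)
    {p : α} (hp : IsAtom p) (z : α) (hpz : ¬ p ≤ z) : z ⋖ z ⊔ p := by
  induction z using WellFoundedLT.induction with
  | _ z ih =>
    rcases eq_bot_or_bot_lt z with rfl | hz
    · simpa only [bot_sup_eq] using hp.bot_covBy
    obtain ⟨a, -, haz⟩ := exists_le_covBy_of_lt hz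
    have hpa : ¬ p ≤ a := fun h => hpz (h.trans haz.le)
    have hz_ne : z ≠ a ⊔ p := fun h => hpz (h ▸ le_sup_right)
    obtain ⟨d, hzd, hapd⟩ := hsemi a z (a ⊔ p) haz (ih a haz.lt hpa) hz_ne
    have hzp_le : z ⊔ p ≤ d := sup_le hzd.le (le_sup_right.trans hapd.le)
    have hzp_eq : z ⊔ p = d :=
      (hzd.eq_or_eq le_sup_left hzp_le).resolve_left (left_lt_sup.2 hpz).ne'
    exact hzp_eq ▸ hzd

theorem isCoatom_of_covBy_of_covBy [OrderTop α]
    (hsemi : ∀ a b c : α, a ⋖ b → a ⋖ c → b ≠ c → ∃ d, b ⋖ d ∧ c ⋖ d)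
    {x h g : α} (hh : IsCoatom h) (hxh : x ⋖ h) (hxg : x ⋖ g) (hgh : g ≠ h) : IsCoatom g := by
  obtain ⟨d, hhd, hgd⟩ := hsemi x h g hxh hxg hgh.symm
  have hd : d = ⊤ := (hh.le_iff.1 hhd.le).resolve_right hhd.lt.ne'
  exact covBy_top_iff.1 (hd ▸ hgd)

end Semimodular

section Atomistic

variable {α : Type*} [PartialOrder α] [OrderBot α]

theorem IsAtomP.isAtom {a : α} (ha : IsAtomP a) : IsAtom a := by
  obtain ⟨z, hz, hza⟩ := ha
  rwa [le_antisymm (hz ⊥) bot_le, bot_covBy_iff] at hza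

theorem exists_isAtom_le_not_le
    (hatom : ∀ x : α, ∃ S : Set α, (∀ a ∈ S, IsAtomP a) ∧ IsLUB S x)
    {g c : α} (hgc : ¬ g ≤ c) : ∃ p, IsAtom p ∧ p ≤ g ∧ ¬ p ≤ c := by
  obtain ⟨S, hS, hSg⟩ := hatom g
  by_contra! hcon
  exact hgc ((isLUB_le_iff hSg).2 fun a ha => hcon a (hS a ha).isAtom (hSg.1 ha))

end Atomistic

section Hyperplanes

variable {α : Type*} [Lattice α] [BoundedOrder α] [WellFoundedLT α] [IsStronglyCoatomic α]
  {h₀ x : α}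

theorem isCoatom_sup_of_covBy_isCoatom
    (hsemi : ∀ a b c : α, a ⋖ b → a ⋖ c → b ≠ c → ∃ d, b ⋖ d ∧ c ⋖ d)
    (hh₀ : IsCoatom h₀) (hx : x ⋖ h₀) {p : α} (hp : IsAtom p) (hph₀ : ¬ p ≤ h₀) :
    IsCoatom (x ⊔ p) :=
  isCoatom_of_covBy_of_covBy hsemi hh₀ hx
    (covBy_sup_of_isAtom_of_not_le hsemi hp x fun h => hph₀ (h.trans hx.le))
    fun h => hph₀ (h ▸ le_sup_right)

theorem coatoms_above_sdiff_eq_image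
    (hsemi : ∀ a b c : α, a ⋖ b → a ⋖ c → b ≠ c → ∃ d, b ⋖ d ∧ c ⋖ d)
    (hatom : ∀ x : α, ∃ S : Set α, (∀ a ∈ S, IsAtomP a) ∧ IsLUB S x)
    (hh₀ : IsCoatom h₀) (hx : x ⋖ h₀) :
    {h : α | IsCoatom h ∧ x ≤ h} \ {h₀} = (x ⊔ ·) '' {p : α | IsAtom p ∧ ¬ p ≤ h₀} := by
  ext g
  constructor
  · rintro ⟨⟨hg, hxg⟩, hgh₀⟩
    have hg_not_le : ¬ g ≤ h₀ := fun hle => hgh₀ ((hg.le_iff_eq hh₀.1).1 hle).symm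
    obtain ⟨p, hp, hpg, hph₀⟩ := exists_isAtom_le_not_le hatom hg_not_le
    exact ⟨p, ⟨hp, hph₀⟩,
      ((isCoatom_sup_of_covBy_isCoatom hsemi hh₀ hx hp hph₀).le_iff_eq hg.1).1
        (sup_le hxg hpg) |>.symm⟩
  · rintro ⟨p, ⟨hp, hph₀⟩, rfl⟩
    exact ⟨⟨isCoatom_sup_of_covBy_isCoatom hsemi hh₀ hx hp hph₀, le_sup_left⟩,
      fun h => hph₀ (h ▸ le_sup_right)⟩

end Hyperplanes

theorem two_coatoms_above_iff_general {L : Type u} [CompleteLattice L]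
    (hL : IsGeomLatFH L)
    (h₀ : L) (hh₀ : IsCoatom h₀) (x : L) (hx : x ⋖ h₀) :
    {h : L | IsCoatom h ∧ x ≤ h}.encard = 2 ↔
      ∃ h : L, IsCoatom h ∧ sSup {p : L | IsAtom p ∧ ¬ p ≤ h₀} ≤ h ∧ x = h₀ ⊓ h := by
  obtain ⟨-, -, hc, hsemi, hatom⟩ := hL
  have := wellFoundedLT_of_chains_finite hc
  have := wellFoundedGT_of_chains_finite hc
  set A := {p : L | IsAtom p ∧ ¬ p ≤ h₀}
  have hH := coatoms_above_sdiff_eq_image hsemi hatom hh₀ hx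
  rw [Set.encard_eq_two_iff_exists_sdiff_eq_singleton (show h₀ ∈ {h : L | IsCoatom h ∧ x ≤ h}
    from ⟨hh₀, hx.le⟩), hH]
  constructor
  · rintro ⟨h, hA_eq⟩
    obtain ⟨⟨hh, hxh⟩, hhh₀⟩ : h ∈ {h : L | IsCoatom h ∧ x ≤ h} \ {h₀} := by
      rw [hH, hA_eq]; exact Set.mem_singleton h
    have hA_le : ∀ p ∈ A, p ≤ h := fun p hp =>
      (hA_eq ▸ Set.mem_image_of_mem (x ⊔ ·) hp : x ⊔ p ∈ ({h} : Set L)) ▸ le_sup_right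
    exact ⟨h, hh, sSup_le hA_le,
      hx.eq_inf_of_le_of_not_le hxh fun hle => hhh₀ ((hh₀.le_iff_eq hh.1).1 hle)⟩
  · rintro ⟨h, hh, hA_le, rfl⟩
    obtain ⟨q, hq, -, hqh₀⟩ := exists_isAtom_le_not_le hatom fun h => hh₀.1 (top_le_iff.1 h)
    refine ⟨h, Set.eq_singleton_iff_nonempty_unique_mem.2 ⟨⟨_, q, ⟨hq, hqh₀⟩, rfl⟩, ?_⟩⟩
    rintro _ ⟨p, ⟨hp, hph₀⟩, rfl⟩
    have hp_le : h₀ ⊓ h ⊔ p ≤ h :=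
      sup_le inf_le_right ((le_sSup (show p ∈ A from ⟨hp, hph₀⟩)).trans hA_le)
    exact (((isCoatom_sup_of_covBy_isCoatom hsemi hh₀ hx hp hph₀).le_iff_eq hh.1).1 hp_le).symm

/-- Let `h₀` be a hyperplane of a geometric lattice of finite height of rank at least 2,
let `y` be the join of all atoms not below `h₀`, and let `x ⋖ h₀`.  Then `x` lies below
exactly two hyperplanes iff `x = h₀ ⊓ h` for some hyperplane `h` above `y`. -/
theorem two_coatoms_above_iff {L : Type u} [CompleteLattice L]
    (hL : IsGeomLatFH L) (r : L → ℕ) (hr : IsRankFn r) (hrank : 2 ≤ r ⊤)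
    (h₀ : L) (hh₀ : IsCoatom h₀) (x : L) (hx : x ⋖ h₀) :
    {h : L | IsCoatom h ∧ x ≤ h}.encard = 2 ↔
      ∃ h : L, IsCoatom h ∧ sSup {p : L | IsAtom p ∧ ¬ p ≤ h₀} ≤ h ∧ x = h₀ ⊓ h :=
  two_coatoms_above_iff_general hL h₀ hh₀ x hx
end
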